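/- A_Λ and B_Γ are jointly measurable if and only if there exists a unit vector φ ∈ C^d ⊗ C^d such that ⟨φ, (A(−j)⊗id)φ⟩ = Λ(j) and ⟨φ, (B(−k)⊗id)φ⟩ = Γ(k) for all j, k ∈ Z_d. -/

import Mathlib

/-!
Both sides are statements about a density matrix ρ on ℂ^d. A unit vector φ ∈ ℂ^d ⊗ ℂ^d gives
ρ = Tr₂ |φ⟩⟨φ| with ⟨φ, (M ⊗ 1) φ⟩ = tr (M ρ), and every density matrix arises this way
(take φ = √ρ read as a vector).

The Weyl operators W(x, y) = V_y U_x permute both bases covariantly: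
W A(i) W* = A(i + x) and W B(i) W* = B(i + y). Given a joint POVM C, the twirled state
ρ = (1/d) Σ W(x, y)* C(x, y) W(x, y) satisfies tr (ρ A(-j)) = Λ(j) and tr (ρ B(-k)) = Γ(k),
by covariance and orthonormality of the A(i) and of the B(i). Conversely, given ρ, the covariant
POVM C(j, k) = (1/d) W(j, k) ρ W(j, k)* has the required marginals: summing over k pinches
U_j ρ U_j* to its diagonal, and summing over j produces the Fourier transform of the sums of ρ
along its cyclic diagonals, which the B-statistics of ρ identify with Γ.
-/

open Matrix Kronecker Finset
open scoped ComplexOrder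

/-- ω = e^{2πi/d} -/
noncomputable def ww (d : ℕ) : ℂ := Complex.exp (2 * Real.pi * Complex.I / d)

/-- shift unitary U_x φ_k = φ_{k+x} -/
noncomputable def Um (d : ℕ) (x : ZMod d) : Matrix (ZMod d) (ZMod d) ℂ :=
  fun i j => if i = j + x then 1 else 0

/-- modulation unitary V_y φ_k = ω^{yk} φ_k -/
noncomputable def Vm (d : ℕ) (y : ZMod d) : Matrix (ZMod d) (ZMod d) ℂ :=
  Matrix.diagonal fun i => ww d ^ (y * i).val

/-- finite Fourier transform F φ_k = (1/√d) Σ_h ω^{-hk} φ_h -/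
noncomputable def Fm (d : ℕ) : Matrix (ZMod d) (ZMod d) ℂ :=
  fun i j => (1 / Real.sqrt d : ℂ) * (ww d)⁻¹ ^ (i * j).val

/-- the standard orthonormal basis vector φ_k -/
noncomputable def phiV (d : ℕ) (k : ZMod d) : ZMod d → ℂ := Pi.single k 1

/-- ψ_k = F* φ_k -/
noncomputable def psiV (d : ℕ) [NeZero d] (k : ZMod d) : ZMod d → ℂ :=
  (Fm d)ᴴ.mulVec (phiV d k)

/-- A(j) = |φ_j⟩⟨φ_j| -/
noncomputable def Aob (d : ℕ) (j : ZMod d) : Matrix (ZMod d) (ZMod d) ℂ :=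
  vecMulVec (phiV d j) (star (phiV d j))

/-- B(k) = |ψ_k⟩⟨ψ_k| -/
noncomputable def Bob (d : ℕ) [NeZero d] (k : ZMod d) : Matrix (ZMod d) (ZMod d) ℂ :=
  vecMulVec (psiV d k) (star (psiV d k))

open scoped ZMod

local notation "𝐞" => ZMod.stdAddChar

section Orthonormal

variable {ι n : Type*} [Fintype ι] [DecidableEq ι] [Fintype n]

lemma trace_vecMulVec_star_mul_vecMulVec_star (u v : n → ℂ) :
    trace (vecMulVec u (star u) * vecMulVec v (star v)) =
      (star u ⬝ᵥ v) * (star v ⬝ᵥ u) := by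
  rw [vecMulVec_mul_vecMulVec, trace_vecMulVec, dotProduct_smul, smul_eq_mul, dotProduct_comm u]

lemma trace_mul_sum_smul_of_orthonormal {P : ι → Matrix n n ℂ}
    (hP : ∀ i j, trace (P i * P j) = if i = j then 1 else 0) (c : ι → ℂ) (m : ι) :
    trace (P m * ∑ i, c i • P i) = c m := by
  simp [Matrix.mul_sum, trace_sum, hP]

end Orthonormal

section Purification

variable {n m : Type*} [Fintype n] [Fintype m]

def reducedDensity (φ : n × m → ℂ) : Matrix n n ℂ :=
  of (Function.curry φ) * (of (Function.curry φ))ᴴ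

lemma reducedDensity_posSemidef (φ : n × m → ℂ) : (reducedDensity φ).PosSemidef :=
  posSemidef_self_mul_conjTranspose _

variable [DecidableEq m]

lemma star_dotProduct_kronecker_one_mulVec (M : Matrix n n ℂ) (φ : n × m → ℂ) :
    star φ ⬝ᵥ ((M ⊗ₖ (1 : Matrix m m ℂ)) *ᵥ φ) = trace (M * reducedDensity φ) := by
  simp only [reducedDensity, trace, diag_apply, mul_apply, dotProduct, mulVec,
    Fintype.sum_prod_type, Pi.star_apply, kroneckerMap_apply, one_apply, conjTranspose_apply,
    of_apply, Function.curry_apply, ite_mul, zero_mul, mul_ite, mul_zero, Finset.sum_ite_eq,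
    Finset.mem_univ, if_true, Finset.mul_sum]
  refine Finset.sum_congr rfl fun a _ => ?_
  rw [Finset.sum_comm]
  exact Finset.sum_congr rfl fun b _ => Finset.sum_congr rfl fun c _ => by ring

lemma star_dotProduct_self_eq_trace_reducedDensity [DecidableEq n] (φ : n × m → ℂ) :
    star φ ⬝ᵥ φ = trace (reducedDensity φ) := by
  simpa using star_dotProduct_kronecker_one_mulVec (1 : Matrix n n ℂ) φ

open scoped MatrixOrder in
lemma exists_reducedDensity_eq [DecidableEq n] {ρ : Matrix n n ℂ} (hρ : ρ.PosSemidef) :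
    ∃ φ : n × n → ℂ, reducedDensity φ = ρ := by
  refine ⟨fun p => CFC.sqrt ρ p.1 p.2, ?_⟩
  show CFC.sqrt ρ * (CFC.sqrt ρ)ᴴ = ρ
  rw [(CFC.sqrt_nonneg ρ).posSemidef.isHermitian.eq, CFC.sqrt_mul_sqrt_self ρ hρ.nonneg]

end Purification

section Characters

variable {d : ℕ} [NeZero d]

lemma ww_pow_val (a : ZMod d) : ww d ^ a.val = 𝐞 a := by
  rw [ZMod.stdAddChar_apply, ZMod.toCircle_apply, ww, ← Complex.exp_nat_mul]
  congr 1
  ring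

lemma star_stdAddChar (a : ZMod d) : star (𝐞 a) = 𝐞 (-a) :=
  (AddChar.map_neg_eq_conj _ a).symm

lemma sum_stdAddChar_mul (t : ZMod d) :
    ∑ k : ZMod d, 𝐞 (k * t) = if t = 0 then (d : ℂ) else 0 := by
  rw [AddChar.sum_mulShift t (ZMod.isPrimitive_stdAddChar d), ZMod.card]
  split_ifs <;> simp

lemma inv_natCast_mul_sum_stdAddChar_mul (a b : ZMod d) :
    (d : ℂ)⁻¹ * ∑ k : ZMod d, 𝐞 (k * (a - b)) = if a = b then 1 else 0 := by
  simp only [sum_stdAddChar_mul, sub_eq_zero]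
  split_ifs <;> simp [NeZero.ne d]

end Characters

lemma inv_sqrt_mul_inv_sqrt (d : ℕ) :
    (Real.sqrt d : ℂ)⁻¹ * (Real.sqrt d : ℂ)⁻¹ = (d : ℂ)⁻¹ := by
  rw [← mul_inv, ← Complex.ofReal_mul, Real.mul_self_sqrt (Nat.cast_nonneg _)]
  push_cast
  rfl

section Observables

variable {d : ℕ}

lemma Aob_eq_diagonal (j : ZMod d) : Aob d j = diagonal (Pi.single j 1) := by
  ext a b
  simp only [Aob, phiV, vecMulVec_apply, Pi.star_apply, diagonal_apply, Pi.single_apply]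
  split_ifs <;> simp_all

variable [NeZero d]

lemma sum_smul_Aob (c : ZMod d → ℂ) : ∑ i, c i • Aob d i = diagonal c := by
  ext a b
  simp [Aob_eq_diagonal, Matrix.sum_apply, diagonal_apply, Pi.single_apply]

lemma trace_Aob_mul (j : ZMod d) (M : Matrix (ZMod d) (ZMod d) ℂ) :
    trace (Aob d j * M) = M j j := by
  simp [Aob_eq_diagonal, trace, Pi.single_apply]

lemma trace_eq_one_of_trace_Aob_neg_mul {ρ : Matrix (ZMod d) (ZMod d) ℂ} {Λ : ZMod d → ℂ}
    (hρ : ∀ j, trace (Aob d (-j) * ρ) = Λ j) (hΛ : ∑ j, Λ j = 1) : trace ρ = 1 := by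
  simp_rw [← hΛ, ← hρ, trace_Aob_mul]
  exact (Equiv.sum_comp (Equiv.neg (ZMod d)) fun j => ρ j j).symm

lemma Fm_apply (i j : ZMod d) : Fm d i j = (Real.sqrt d : ℂ)⁻¹ * 𝐞 (-(i * j)) := by
  rw [Fm, one_div, inv_pow, ww_pow_val, AddChar.map_neg_eq_inv]

lemma psiV_apply (k h : ZMod d) : psiV d k h = (Real.sqrt d : ℂ)⁻¹ * 𝐞 (k * h) := by
  simp [psiV, phiV, mulVec, dotProduct, Pi.single_apply, Fm_apply, star_stdAddChar]

lemma Bob_apply (k a b : ZMod d) : Bob d k a b = (d : ℂ)⁻¹ * 𝐞 (k * (a - b)) := by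
  rw [Bob, vecMulVec_apply, Pi.star_apply, psiV_apply, psiV_apply, star_mul', star_stdAddChar,
    mul_sub, sub_eq_add_neg, AddChar.map_add_eq_mul, star_inv₀, Complex.star_def,
    Complex.conj_ofReal]
  linear_combination (𝐞 (k * a) * 𝐞 (-(k * b))) * inv_sqrt_mul_inv_sqrt d

lemma trace_Aob_mul_Aob (i j : ZMod d) :
    trace (Aob d i * Aob d j) = if i = j then 1 else 0 := by
  rw [Aob, Aob, trace_vecMulVec_star_mul_vecMulVec_star]
  obtain rfl | h := eq_or_ne i j
  · simp [phiV]
  · simp [phiV, h, h.symm]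

lemma star_psiV_dotProduct_psiV (i j : ZMod d) :
    star (psiV d i) ⬝ᵥ psiV d j = if i = j then 1 else 0 := by
  rw [← if_congr eq_comm rfl rfl, ← inv_natCast_mul_sum_stdAddChar_mul j i, Finset.mul_sum]
  refine Finset.sum_congr rfl fun h _ => ?_
  rw [Pi.star_apply, psiV_apply, psiV_apply, star_mul', star_stdAddChar, star_inv₀,
    Complex.star_def, Complex.conj_ofReal, mul_sub, sub_eq_add_neg, AddChar.map_add_eq_mul,
    mul_comm h j, mul_comm h i]
  linear_combination (𝐞 (j * h) * 𝐞 (-(i * h))) * inv_sqrt_mul_inv_sqrt d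

lemma trace_Bob_mul_Bob (i j : ZMod d) :
    trace (Bob d i * Bob d j) = if i = j then 1 else 0 := by
  rw [Bob, Bob, trace_vecMulVec_star_mul_vecMulVec_star, star_psiV_dotProduct_psiV,
    star_psiV_dotProduct_psiV]
  obtain rfl | h := eq_or_ne i j
  · simp
  · simp [h, h.symm]

end Observables

section Weyl

variable {d : ℕ}

lemma Um_apply_eq_ite (x a b : ZMod d) : Um d x a b = if b = a - x then 1 else 0 := by
  simp only [Um, eq_sub_iff_add_eq, eq_comm]

variable [NeZero d]

noncomputable def weyl (x y : ZMod d) : Matrix (ZMod d) (ZMod d) ℂ := Vm d y * Um d x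

lemma Um_mul_mul_conjTranspose_apply (x : ZMod d) (M : Matrix (ZMod d) (ZMod d) ℂ)
    (a b : ZMod d) :
    (Um d x * M * (Um d x)ᴴ) a b = M (a - x) (b - x) := by
  simp [Um_apply_eq_ite, Matrix.mul_apply]

lemma Vm_eq_diagonal (y : ZMod d) : Vm d y = diagonal fun i => 𝐞 (y * i) := by
  simp only [Vm, ww_pow_val]

lemma Vm_mul_mul_conjTranspose_apply (y : ZMod d) (M : Matrix (ZMod d) (ZMod d) ℂ)
    (a b : ZMod d) :
    (Vm d y * M * (Vm d y)ᴴ) a b = 𝐞 (y * (a - b)) * M a b := by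
  rw [Vm_eq_diagonal, diagonal_conjTranspose, mul_diagonal, diagonal_mul, Pi.star_apply,
    star_stdAddChar, mul_sub, sub_eq_add_neg, AddChar.map_add_eq_mul]
  ring

lemma weyl_mul_mul_conjTranspose_apply (x y : ZMod d) (M : Matrix (ZMod d) (ZMod d) ℂ)
    (a b : ZMod d) :
    (weyl x y * M * (weyl x y)ᴴ) a b = 𝐞 (y * (a - b)) * M (a - x) (b - x) := by
  rw [weyl, conjTranspose_mul, ← Matrix.mul_assoc, Matrix.mul_assoc (Vm d y),
    Matrix.mul_assoc (Vm d y), Vm_mul_mul_conjTranspose_apply, Um_mul_mul_conjTranspose_apply]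

lemma weyl_mul_Aob_mul_conjTranspose (x y i : ZMod d) :
    weyl x y * Aob d i * (weyl x y)ᴴ = Aob d (i + x) := by
  ext a b
  rw [weyl_mul_mul_conjTranspose_apply, Aob_eq_diagonal, Aob_eq_diagonal, diagonal_apply,
    diagonal_apply]
  obtain rfl | hab := eq_or_ne a b
  · simp [Pi.single_apply, sub_eq_iff_eq_add]
  · simp [hab]

lemma weyl_mul_Bob_mul_conjTranspose (x y i : ZMod d) :
    weyl x y * Bob d i * (weyl x y)ᴴ = Bob d (i + y) := by
  ext a b
  rw [weyl_mul_mul_conjTranspose_apply, Bob_apply, Bob_apply, sub_sub_sub_cancel_right,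
    mul_left_comm, ← AddChar.map_add_eq_mul, add_comm i, add_mul]

end Weyl

section Twirl

variable {d : ℕ} [NeZero d] (C : ZMod d → ZMod d → Matrix (ZMod d) (ZMod d) ℂ)

noncomputable def twirl : Matrix (ZMod d) (ZMod d) ℂ :=
  (d : ℂ)⁻¹ • ∑ x, ∑ y, (weyl x y)ᴴ * C x y * weyl x y

lemma trace_mul_twirl (M : Matrix (ZMod d) (ZMod d) ℂ) :
    trace (M * twirl C) =
      (d : ℂ)⁻¹ * ∑ x, ∑ y, trace (weyl x y * M * (weyl x y)ᴴ * C x y) := by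
  simp only [twirl, Matrix.mul_smul, trace_smul, smul_eq_mul, Matrix.mul_sum, trace_sum]
  congr 1
  refine Finset.sum_congr rfl fun x _ => Finset.sum_congr rfl fun y _ => ?_
  rw [← Matrix.mul_assoc, ← Matrix.mul_assoc, trace_mul_comm, ← Matrix.mul_assoc,
    ← Matrix.mul_assoc]

variable {C}

lemma twirl_posSemidef (hC : ∀ x y, (C x y).PosSemidef) : (twirl C).PosSemidef :=
  (posSemidef_sum _ fun x _ => posSemidef_sum _ fun y _ =>
    (hC x y).conjTranspose_mul_mul_same _).smul (by positivity)

lemma trace_Aob_neg_mul_twirl {Λ : ZMod d → ℂ}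
    (hΛ : ∀ x, ∑ y, C x y = ∑ i, Λ (x - i) • Aob d i) (j : ZMod d) :
    trace (Aob d (-j) * twirl C) = Λ j := by
  have hx : ∀ x, ∑ y, trace (Aob d (-j + x) * C x y) = Λ j := fun x => by
    rw [← trace_sum, ← Matrix.mul_sum, hΛ, trace_mul_sum_smul_of_orthonormal trace_Aob_mul_Aob,
      sub_add_cancel_right, neg_neg]
  simp_rw [trace_mul_twirl, weyl_mul_Aob_mul_conjTranspose, hx, sum_const, card_univ, ZMod.card,
    nsmul_eq_mul, inv_mul_cancel_left₀ (NeZero.ne (d : ℂ))]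

lemma trace_Bob_neg_mul_twirl {Γ : ZMod d → ℂ}
    (hΓ : ∀ y, ∑ x, C x y = ∑ i, Γ (y - i) • Bob d i) (k : ZMod d) :
    trace (Bob d (-k) * twirl C) = Γ k := by
  have hy : ∀ y, ∑ x, trace (Bob d (-k + y) * C x y) = Γ k := fun y => by
    rw [← trace_sum, ← Matrix.mul_sum, hΓ, trace_mul_sum_smul_of_orthonormal trace_Bob_mul_Bob,
      sub_add_cancel_right, neg_neg]
  simp_rw [trace_mul_twirl, weyl_mul_Bob_mul_conjTranspose]
  rw [Finset.sum_comm]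
  simp_rw [hy, sum_const, card_univ, ZMod.card, nsmul_eq_mul,
    inv_mul_cancel_left₀ (NeZero.ne (d : ℂ))]

end Twirl

section Covariant

variable {d : ℕ} [NeZero d] {ρ : Matrix (ZMod d) (ZMod d) ℂ}

def diagSum (ρ : Matrix (ZMod d) (ZMod d) ℂ) (s : ZMod d) : ℂ := ∑ p, ρ (p + s) p

lemma sum_apply_sub_sub_eq_diagSum (ρ : Matrix (ZMod d) (ZMod d) ℂ) (a b : ZMod d) :
    ∑ j, ρ (a - j) (b - j) = diagSum ρ (a - b) :=
  Fintype.sum_equiv (Equiv.subLeft b) _ _ fun j => by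
    rw [Equiv.subLeft_apply, sub_add_sub_cancel']

lemma trace_Bob_neg_mul (ρ : Matrix (ZMod d) (ZMod d) ℂ) (k : ZMod d) :
    trace (Bob d (-k) * ρ) = 𝓕⁻ (diagSum ρ) k := by
  simp only [ZMod.invDFT_apply', ZMod.dft_apply, diagSum, smul_eq_mul, Finset.mul_sum, trace,
    diag_apply, mul_apply, Bob_apply]
  conv_rhs => rw [Finset.sum_comm]
  refine Finset.sum_congr rfl fun a _ => ?_
  refine (Fintype.sum_equiv (Equiv.addLeft a) _ _ fun s => ?_).symm
  rw [Equiv.coe_addLeft, show -k * (a - (a + s)) = -(s * -k) by ring]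
  ring

lemma sum_mul_stdAddChar_eq_dft (Γ : ZMod d → ℂ) (k s : ZMod d) :
    ∑ i, Γ (k - i) * 𝐞 (i * s) = 𝐞 (k * s) * 𝓕 Γ s := by
  rw [ZMod.dft_apply, Finset.mul_sum, ← (Equiv.subLeft k).sum_comp]
  refine Finset.sum_congr rfl fun i _ => ?_
  rw [Equiv.subLeft_apply, sub_sub_cancel, smul_eq_mul, mul_comm (Γ i), ← mul_assoc,
    ← AddChar.map_add_eq_mul]
  congr 2
  ring

noncomputable def covariantPOVM (ρ : Matrix (ZMod d) (ZMod d) ℂ) (j k : ZMod d) :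
    Matrix (ZMod d) (ZMod d) ℂ :=
  (d : ℂ)⁻¹ • (weyl j k * ρ * (weyl j k)ᴴ)

lemma covariantPOVM_posSemidef (hρ : ρ.PosSemidef) (j k : ZMod d) :
    (covariantPOVM ρ j k).PosSemidef :=
  (hρ.mul_mul_conjTranspose_same _).smul (by positivity)

lemma covariantPOVM_apply (ρ : Matrix (ZMod d) (ZMod d) ℂ) (j k a b : ZMod d) :
    covariantPOVM ρ j k a b = (d : ℂ)⁻¹ * 𝐞 (k * (a - b)) * ρ (a - j) (b - j) := by
  rw [covariantPOVM, Matrix.smul_apply, weyl_mul_mul_conjTranspose_apply, smul_eq_mul, mul_assoc]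

lemma sum_covariantPOVM_eq_sum_smul_Aob {Λ : ZMod d → ℂ}
    (hρ : ∀ j, trace (Aob d (-j) * ρ) = Λ j) (j : ZMod d) :
    ∑ k, covariantPOVM ρ j k = ∑ i, Λ (j - i) • Aob d i := by
  ext a b
  simp_rw [sum_smul_Aob, diagonal_apply, Matrix.sum_apply, covariantPOVM_apply, ← Finset.sum_mul,
    ← Finset.mul_sum, inv_natCast_mul_sum_stdAddChar_mul]
  split_ifs with hab
  · rw [hab, one_mul, ← trace_Aob_mul (b - j) ρ, ← neg_sub j b, hρ]
  · rw [zero_mul]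

lemma sum_covariantPOVM_eq_sum_smul_Bob {Γ : ZMod d → ℂ}
    (hρ : ∀ k, trace (Bob d (-k) * ρ) = Γ k) (k : ZMod d) :
    ∑ j, covariantPOVM ρ j k = ∑ i, Γ (k - i) • Bob d i := by
  have hdiag : diagSum ρ = 𝓕 Γ := by
    rw [← LinearEquiv.symm_apply_eq]
    exact funext fun k => (trace_Bob_neg_mul ρ k).symm.trans (hρ k)
  ext a b
  simp only [Matrix.sum_apply, covariantPOVM_apply, Matrix.smul_apply, Bob_apply, smul_eq_mul]
  calc ∑ j, (d : ℂ)⁻¹ * 𝐞 (k * (a - b)) * ρ (a - j) (b - j)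
      = (d : ℂ)⁻¹ * (𝐞 (k * (a - b)) * 𝓕 Γ (a - b)) := by
        rw [← Finset.mul_sum, sum_apply_sub_sub_eq_diagSum, hdiag, mul_assoc]
    _ = ∑ i, Γ (k - i) * ((d : ℂ)⁻¹ * 𝐞 (i * (a - b))) := by
        rw [← sum_mul_stdAddChar_eq_dft, Finset.mul_sum]
        exact Finset.sum_congr rfl fun i _ => mul_left_comm _ _ _

end Covariant

theorem joint_measurability_iff_vector_general (d : ℕ) [NeZero d]
    (Λ Γ : ZMod d → ℝ) (hΛsum : ∑ i : ZMod d, Λ i = 1) :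
    (∃ C : ZMod d → ZMod d → Matrix (ZMod d) (ZMod d) ℂ,
        (∀ j k, (C j k).PosSemidef) ∧
        (∀ j, ∑ k : ZMod d, C j k = ∑ i : ZMod d, (Λ (j - i) : ℂ) • Aob d i) ∧
        (∀ k, ∑ j : ZMod d, C j k = ∑ i : ZMod d, (Γ (k - i) : ℂ) • Bob d i)) ↔
    (∃ φ : ZMod d × ZMod d → ℂ, star φ ⬝ᵥ φ = 1 ∧
        (∀ j : ZMod d,
          star φ ⬝ᵥ ((Aob d (-j) ⊗ₖ (1 : Matrix (ZMod d) (ZMod d) ℂ)).mulVec φ) = (Λ j : ℂ)) ∧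
        (∀ k : ZMod d,
          star φ ⬝ᵥ ((Bob d (-k) ⊗ₖ (1 : Matrix (ZMod d) (ZMod d) ℂ)).mulVec φ) = (Γ k : ℂ))) := by
  simp only [star_dotProduct_self_eq_trace_reducedDensity, star_dotProduct_kronecker_one_mulVec]
  constructor
  · rintro ⟨C, hC, hΛ, hΓ⟩
    obtain ⟨φ, hφ⟩ := exists_reducedDensity_eq (twirl_posSemidef hC)
    have hA := trace_Aob_neg_mul_twirl (Λ := fun i => (Λ i : ℂ)) hΛ
    have hB := trace_Bob_neg_mul_twirl (Γ := fun i => (Γ i : ℂ)) hΓ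
    refine ⟨φ, ?_⟩
    rw [hφ]
    exact ⟨trace_eq_one_of_trace_Aob_neg_mul hA (mod_cast hΛsum), hA, hB⟩
  · rintro ⟨φ, -, hΛ, hΓ⟩
    exact ⟨covariantPOVM (reducedDensity φ),
      covariantPOVM_posSemidef (reducedDensity_posSemidef φ),
      sum_covariantPOVM_eq_sum_smul_Aob hΛ, sum_covariantPOVM_eq_sum_smul_Bob hΓ⟩

theorem joint_measurability_iff_vector (d : ℕ) (hd : 2 ≤ d) [NeZero d]
    (Λ Γ : ZMod d → ℝ) (hΛpos : ∀ i, 0 ≤ Λ i) (hΛsum : ∑ i : ZMod d, Λ i = 1)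
    (hΓpos : ∀ i, 0 ≤ Γ i) (hΓsum : ∑ i : ZMod d, Γ i = 1) :
    (∃ C : ZMod d → ZMod d → Matrix (ZMod d) (ZMod d) ℂ,
        (∀ j k, (C j k).PosSemidef) ∧
        (∀ j, ∑ k : ZMod d, C j k = ∑ i : ZMod d, (Λ (j - i) : ℂ) • Aob d i) ∧
        (∀ k, ∑ j : ZMod d, C j k = ∑ i : ZMod d, (Γ (k - i) : ℂ) • Bob d i)) ↔
    (∃ φ : ZMod d × ZMod d → ℂ, star φ ⬝ᵥ φ = 1 ∧
        (∀ j : ZMod d,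
          star φ ⬝ᵥ ((Aob d (-j) ⊗ₖ (1 : Matrix (ZMod d) (ZMod d) ℂ)).mulVec φ) = (Λ j : ℂ)) ∧
        (∀ k : ZMod d,
          star φ ⬝ᵥ ((Bob d (-k) ⊗ₖ (1 : Matrix (ZMod d) (ZMod d) ℂ)).mulVec φ) = (Γ k : ℂ))) :=
  joint_measurability_iff_vector_general d Λ Γ hΛsum
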